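/- Let σ be a nondecreasing sigmoidal function satisfying (Σ1)–(Σ4), let a < b be integers, let δ > 0 with a + δ < b − δ, and let f: [a,b] → ℝ be continuous. Then the modified neural network operators F̃_n(f, x) := ∑_{k=na}^{nb} f(k/n) φ_σ(nx − k) converge to f uniformly on I_δ := [a+δ, b−δ], i.e., lim_{n→+∞} sup_{x∈I_δ} |F̃_n(f, x) − f(x)| = 0. -/

import Mathlib

open Filter Topology MeasureTheory

/-- The density (kernel) function generated by a sigmoidal function. -/
noncomputable def phiFn (σ : ℝ → ℝ) (x : ℝ) : ℝ := (σ (x + 1) - σ (x - 1)) / 2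

/-- σ is a (measurable) sigmoidal function. -/
def Sigmoidal (σ : ℝ → ℝ) : Prop :=
  Measurable σ ∧ Tendsto σ atBot (𝓝 0) ∧ Tendsto σ atTop (𝓝 1)

/-- (Σ1): σ(x) - 1/2 is an odd function. -/
def Sigma1 (σ : ℝ → ℝ) : Prop := ∀ x : ℝ, σ (-x) - 1/2 = -(σ x - 1/2)

/-- (Σ2): σ ∈ C²(ℝ) and σ is concave on [0, +∞). -/
def Sigma2 (σ : ℝ → ℝ) : Prop := ContDiff ℝ 2 σ ∧ ConcaveOn ℝ (Set.Ici 0) σ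

/-- (Σ3): σ(x) = O(|x|^{-α-1}) as x → -∞, with α > 0. -/
def Sigma3 (σ : ℝ → ℝ) (α : ℝ) : Prop :=
  0 < α ∧ σ =O[atBot] fun x : ℝ => |x| ^ (-α - 1)

/-- (Σ4): σ ∈ C^m(ℝ), m ≥ 2, and for each s = 1,…,m there are constants
`K s, C s > 0` with |σ^{(s)}(x)| ≤ C s * |x|^{-β-1} for |x| ≥ K s, where β > m + 1. -/
def Sigma4 (σ : ℝ → ℝ) (m : ℕ) (β : ℝ) (K C : ℕ → ℝ) : Prop :=
  2 ≤ m ∧ (m : ℝ) + 1 < β ∧ ContDiff ℝ m σ ∧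
    ∀ s : ℕ, 1 ≤ s → s ≤ m → 0 < K s ∧ 0 < C s ∧
      ∀ x : ℝ, K s ≤ |x| → |iteratedDeriv s σ x| ≤ C s * |x| ^ (-β - 1)

/-- Algebraic moment of order ν of Φ. -/
noncomputable def algMoment (Φ : ℝ → ℝ) (ν : ℕ) (x : ℝ) : ℝ :=
  ∑' k : ℤ, Φ (x - (k : ℝ)) * ((k : ℝ) - x) ^ ν

/-- (Σ5): the algebraic moments of order j = 1,…,m of φ_σ are constants A j. -/
def Sigma5 (σ : ℝ → ℝ) (m : ℕ) (A : ℕ → ℝ) : Prop :=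
  ∀ j : ℕ, 1 ≤ j → j ≤ m → ∀ x : ℝ, algMoment (phiFn σ) j x = A j

/-- Truncated algebraic moment of order ν of Φ (associated with integers a < b). -/
noncomputable def truncMoment (Φ : ℝ → ℝ) (ν : ℕ) (a b : ℤ) (n : ℕ) (u : ℝ) : ℝ :=
  ∑ k ∈ Finset.Icc ((n : ℤ) * a) ((n : ℤ) * b), Φ (u - (k : ℝ)) * ((k : ℝ) - u) ^ ν

/-- The ν-th discrete absolute moment function of Φ (before taking sup over u). -/
noncomputable def discMoment (Φ : ℝ → ℝ) (ν : ℝ) (u : ℝ) : ℝ :=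
  ∑' k : ℤ, |Φ (u - (k : ℝ))| * |u - (k : ℝ)| ^ ν

/-- The Riemann zeta function (as a real series), ζ(p) = ∑_{i≥1} i^{-p}. -/
noncomputable def zetaR (p : ℝ) : ℝ := ∑' i : ℕ, ((i : ℝ) + 1) ^ (-p)

/-- The NN operator F_n activated by σ. -/
noncomputable def Fop (σ : ℝ → ℝ) (f : ℝ → ℝ) (a b : ℝ) (n : ℕ) (x : ℝ) : ℝ :=
  (∑ k ∈ Finset.Icc ⌈(n : ℝ) * a⌉ ⌊(n : ℝ) * b⌋, f ((k : ℝ) / n) * phiFn σ ((n : ℝ) * x - k)) /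
    (∑ k ∈ Finset.Icc ⌈(n : ℝ) * a⌉ ⌊(n : ℝ) * b⌋, phiFn σ ((n : ℝ) * x - k))

/-- The modified NN operator F̃_n (integer endpoints a < b). -/
noncomputable def Ftil (σ : ℝ → ℝ) (f : ℝ → ℝ) (a b : ℤ) (n : ℕ) (x : ℝ) : ℝ :=
  ∑ k ∈ Finset.Icc ((n : ℤ) * a) ((n : ℤ) * b), f ((k : ℝ) / n) * phiFn σ ((n : ℝ) * x - (k : ℝ))

/-- Sup-norm of g on [a,b]. -/
noncomputable def supNormOn (g : ℝ → ℝ) (a b : ℝ) : ℝ := ⨆ x : Set.Icc a b, |g x|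

/-- Modulus of continuity of g on [a,b]. -/
noncomputable def modulus (g : ℝ → ℝ) (a b h : ℝ) : ℝ :=
  sSup {y : ℝ | ∃ u ∈ Set.Icc a b, ∃ v ∈ Set.Icc a b, |u - v| ≤ h ∧ y = |g u - g v|}

/-- Discrete absolute moment (natural order ν) of Φ: sup over u of the moment series. -/
noncomputable def dmomentN (Φ : ℝ → ℝ) (ν : ℕ) : ℝ :=
  ⨆ u : ℝ, ∑' k : ℤ, |Φ (u - (k : ℝ))| * |u - (k : ℝ)| ^ ν


/-!
The kernel `phiFn σ` is nonnegative and its integer translates telescope: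
`∑_{k=p}^{q} φ_σ(u - k)` is an explicit combination of four values of `σ`. Hence, for
`x ∈ [a + δ, b - δ]`, the weights `φ_σ(nx - k)`, `na ≤ k ≤ nb`, have total mass at most `1` and
at least `1 - ((1 - σ(nδ)) + σ(-nδ))`, while the mass they put on nodes with `|x - k/n| ≥ η` is
at most `(1 - σ(nη - 1)) + σ(1 - nη)`. Both defects tend to `0` as `n → ∞` uniformly in `x`, so
the usual approximate-identity argument with the uniform continuity of `f` on `[a, b]` applies.
-/

open Finset

lemma sum_phiFn_Icc (σ : ℝ → ℝ) (u : ℝ) {p q : ℤ} (hpq : p ≤ q) :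
    ∑ k ∈ Icc p q, phiFn σ (u - k) =
      (σ (u - p + 1) + σ (u - p) - σ (u - q) - σ (u - q - 1)) / 2 := by
  induction q, hpq using Int.leInduction with
  | base => simp only [Icc_self, sum_singleton, phiFn]; ring
  | succ q hpq ih =>
    rw [← insert_Icc_right_eq_Icc_add_one (by omega), sum_insert (by simp), ih]
    simp only [phiFn, Int.cast_add, Int.cast_one]
    ring_nf

noncomputable def sigmoidTail (σ : ℝ → ℝ) (t : ℝ) : ℝ := (1 - σ t) + σ (-t)

section Sigmoid

variable {σ : ℝ → ℝ}

lemma sigmoid_nonneg (hmono : Monotone σ) (h0 : Tendsto σ atBot (𝓝 0)) (x : ℝ) : 0 ≤ σ x :=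
  le_of_tendsto h0 (by filter_upwards [eventually_le_atBot x] with y hy using hmono hy)

lemma sigmoid_le_one (hmono : Monotone σ) (h1 : Tendsto σ atTop (𝓝 1)) (x : ℝ) : σ x ≤ 1 :=
  ge_of_tendsto h1 (by filter_upwards [eventually_ge_atTop x] with y hy using hmono hy)

lemma phiFn_nonneg (hmono : Monotone σ) (x : ℝ) : 0 ≤ phiFn σ x := by
  have := hmono (show x - 1 ≤ x + 1 by linarith)
  unfold phiFn
  linarith

lemma sum_phiFn_Icc_le_left (hmono : Monotone σ) (h0 : Tendsto σ atBot (𝓝 0)) (u : ℝ)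
    (p q : ℤ) : ∑ k ∈ Icc p q, phiFn σ (u - k) ≤ σ (u - p + 1) := by
  rcases le_or_gt p q with hpq | hqp
  · rw [sum_phiFn_Icc σ u hpq]
    have := hmono (show u - p ≤ u - p + 1 by linarith)
    linarith [sigmoid_nonneg hmono h0 (u - q), sigmoid_nonneg hmono h0 (u - q - 1)]
  · rw [Icc_eq_empty_of_lt hqp, sum_empty]
    exact sigmoid_nonneg hmono h0 _

lemma sum_phiFn_Icc_le_right (hmono : Monotone σ) (h1 : Tendsto σ atTop (𝓝 1)) (u : ℝ)
    (p q : ℤ) : ∑ k ∈ Icc p q, phiFn σ (u - k) ≤ 1 - σ (u - q - 1) := by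
  rcases le_or_gt p q with hpq | hqp
  · rw [sum_phiFn_Icc σ u hpq]
    have := hmono (show u - q - 1 ≤ u - q by linarith)
    linarith [sigmoid_le_one hmono h1 (u - p + 1), sigmoid_le_one hmono h1 (u - p)]
  · rw [Icc_eq_empty_of_lt hqp, sum_empty]
    linarith [sigmoid_le_one hmono h1 (u - q - 1)]

lemma sum_phiFn_Icc_le_one (hmono : Monotone σ) (h0 : Tendsto σ atBot (𝓝 0))
    (h1 : Tendsto σ atTop (𝓝 1)) (u : ℝ) (p q : ℤ) : ∑ k ∈ Icc p q, phiFn σ (u - k) ≤ 1 :=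
  (sum_phiFn_Icc_le_left hmono h0 u p q).trans (sigmoid_le_one hmono h1 _)

lemma tendsto_sigmoidTail (h0 : Tendsto σ atBot (𝓝 0)) (h1 : Tendsto σ atTop (𝓝 1)) :
    Tendsto (sigmoidTail σ) atTop (𝓝 0) := by
  unfold sigmoidTail
  simpa using ((tendsto_const_nhds (x := (1 : ℝ))).sub h1).add (h0.comp tendsto_neg_atTop_atBot)

lemma one_sub_sum_phiFn_Icc_le (hmono : Monotone σ) {u t : ℝ} {p q : ℤ} (hpq : p ≤ q)
    (hp : t ≤ u - p) (hq : u - q ≤ -t) :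
    1 - ∑ k ∈ Icc p q, phiFn σ (u - k) ≤ sigmoidTail σ t := by
  rw [sum_phiFn_Icc σ u hpq, sigmoidTail]
  have := hmono (show u - p ≤ u - p + 1 by linarith)
  have := hmono (show u - q - 1 ≤ u - q by linarith)
  linarith [hmono hp, hmono hq]

lemma sum_phiFn_far_le (hmono : Monotone σ) (h0 : Tendsto σ atBot (𝓝 0))
    (h1 : Tendsto σ atTop (𝓝 1)) (u r : ℝ) (p q : ℤ) :
    ∑ k ∈ (Icc p q).filter (fun k : ℤ => r ≤ |u - k|), phiFn σ (u - k) ≤ sigmoidTail σ (r - 1) := by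
  have hsub : (Icc p q).filter (fun k : ℤ => r ≤ |u - k|) ⊆ Icc p ⌊u - r⌋ ∪ Icc ⌈u + r⌉ q := by
    intro k hk
    simp only [mem_filter, mem_union, mem_Icc] at hk ⊢
    rcases le_abs'.1 hk.2 with h | h
    · exact Or.inr ⟨Int.ceil_le.2 (by linarith), hk.1.2⟩
    · exact Or.inl ⟨hk.1.1, Int.le_floor.2 (by linarith)⟩
  have hleft : ∑ k ∈ Icc p ⌊u - r⌋, phiFn σ (u - k) ≤ 1 - σ (r - 1) := by
    refine (sum_phiFn_Icc_le_right hmono h1 u _ _).trans ?_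
    linarith [hmono (show r - 1 ≤ u - ⌊u - r⌋ - 1 by linarith [Int.floor_le (u - r)])]
  have hright : ∑ k ∈ Icc ⌈u + r⌉ q, phiFn σ (u - k) ≤ σ (-(r - 1)) :=
    (sum_phiFn_Icc_le_left hmono h0 u _ _).trans
      (hmono (by linarith [Int.le_ceil (u + r)]))
  have hnonneg : ∀ k, 0 ≤ phiFn σ (u - k) := fun k => phiFn_nonneg hmono _
  calc ∑ k ∈ (Icc p q).filter (fun k : ℤ => r ≤ |u - k|), phiFn σ (u - k)
      ≤ ∑ k ∈ Icc p ⌊u - r⌋ ∪ Icc ⌈u + r⌉ q, phiFn σ (u - k) :=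
        sum_le_sum_of_subset_of_nonneg hsub fun k _ _ => hnonneg k
    _ ≤ ∑ k ∈ Icc p ⌊u - r⌋, phiFn σ (u - k) + ∑ k ∈ Icc ⌈u + r⌉ q, phiFn σ (u - k) := by
        rw [← sum_union_inter]
        exact le_add_of_nonneg_right (sum_nonneg fun k _ => hnonneg k)
    _ ≤ sigmoidTail σ (r - 1) := by rw [sigmoidTail]; linarith

end Sigmoid

lemma abs_sum_mul_sub_le {ι : Type*} (s : Finset ι) (far : ι → Prop) [DecidablePred far]
    {g w : ι → ℝ} {y ε M : ℝ} (hw : ∀ k ∈ s, 0 ≤ w k) (hw1 : ∑ k ∈ s, w k ≤ 1) (hε : 0 ≤ ε)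
    (hy : |y| ≤ M) (hnear : ∀ k ∈ s, ¬ far k → |g k - y| ≤ ε)
    (hfar : ∀ k ∈ s, far k → |g k - y| ≤ 2 * M) :
    |∑ k ∈ s, g k * w k - y| ≤ ε + 2 * M * ∑ k ∈ s with far k, w k + M * (1 - ∑ k ∈ s, w k) := by
  have hdecomp : ∑ k ∈ s, g k * w k - y =
      ∑ k ∈ s, (g k - y) * w k - y * (1 - ∑ k ∈ s, w k) := by
    simp only [sub_mul, sum_sub_distrib, ← mul_sum]
    ring
  have hnear_sum : ∑ k ∈ s with ¬ far k, |g k - y| * w k ≤ ε :=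
    calc ∑ k ∈ s with ¬ far k, |g k - y| * w k
        ≤ ∑ k ∈ s with ¬ far k, ε * w k := sum_le_sum fun k hk => by
          rw [mem_filter] at hk
          exact mul_le_mul_of_nonneg_right (hnear k hk.1 hk.2) (hw k hk.1)
      _ = ε * ∑ k ∈ s with ¬ far k, w k := (mul_sum _ _ _).symm
      _ ≤ ε * 1 := by
          gcongr
          exact (sum_le_sum_of_subset_of_nonneg (filter_subset _ s)
            fun k hk _ => hw k hk).trans hw1
      _ = ε := mul_one ε
  have hfar_sum : ∑ k ∈ s with far k, |g k - y| * w k ≤ 2 * M * ∑ k ∈ s with far k, w k := by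
    rw [mul_sum]
    refine sum_le_sum fun k hk => ?_
    rw [mem_filter] at hk
    exact mul_le_mul_of_nonneg_right (hfar k hk.1 hk.2) (hw k hk.1)
  have hdefect : 0 ≤ 1 - ∑ k ∈ s, w k := sub_nonneg.2 hw1
  calc |∑ k ∈ s, g k * w k - y|
      ≤ ∑ k ∈ s, |g k - y| * w k + M * (1 - ∑ k ∈ s, w k) := by
        rw [hdecomp]
        refine (abs_sub _ _).trans (add_le_add ?_ ?_)
        · refine (abs_sum_le_sum_abs _ _).trans (sum_le_sum fun k hk => ?_)
          rw [abs_mul, abs_of_nonneg (hw k hk)]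
        · rw [abs_mul, abs_of_nonneg hdefect]
          exact mul_le_mul_of_nonneg_right hy hdefect
    _ ≤ ε + 2 * M * ∑ k ∈ s with far k, w k + M * (1 - ∑ k ∈ s, w k) := by
        rw [← sum_filter_not_add_sum_filter s far]
        linarith

lemma div_natCast_mem_Icc {a b k : ℤ} {n : ℕ} (hn : 0 < n) (hk : k ∈ Icc ((n : ℤ) * a) (n * b)) :
    (k : ℝ) / n ∈ Set.Icc (a : ℝ) b := by
  rw [mem_Icc] at hk
  have hn' : (0 : ℝ) < n := Nat.cast_pos.2 hn
  constructor
  · rw [le_div_iff₀ hn', mul_comm]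
    exact_mod_cast hk.1
  · rw [div_le_iff₀ hn', mul_comm]
    exact_mod_cast hk.2

lemma abs_Ftil_sub_le {σ f : ℝ → ℝ} (hmono : Monotone σ) (h0 : Tendsto σ atBot (𝓝 0))
    (h1 : Tendsto σ atTop (𝓝 1)) {a b : ℤ} {M ε η δ x : ℝ} {n : ℕ}
    (hM : ∀ y ∈ Set.Icc (a : ℝ) b, |f y| ≤ M) (hε : 0 ≤ ε)
    (hfη : ∀ y ∈ Set.Icc (a : ℝ) b, dist y x < η → |f y - f x| ≤ ε) (hn : 0 < n) (hδ : 0 ≤ δ)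
    (hx : x ∈ Set.Icc ((a : ℝ) + δ) (b - δ)) :
    |Ftil σ f a b n x - f x| ≤
      ε + 2 * M * sigmoidTail σ (n * η - 1) + M * sigmoidTail σ (n * δ) := by
  have hn' : (0 : ℝ) < n := Nat.cast_pos.2 hn
  have hxab : x ∈ Set.Icc (a : ℝ) b := ⟨by linarith [hx.1], by linarith [hx.2]⟩
  have hM0 : 0 ≤ M := (abs_nonneg _).trans (hM x hxab)
  have hnab : (n : ℤ) * a ≤ n * b := by
    refine mul_le_mul_of_nonneg_left ?_ (Int.natCast_nonneg n)
    exact_mod_cast hxab.1.trans hxab.2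
  have hscale : ∀ k : ℤ, |(n : ℝ) * x - k| = n * |x - k / n| := fun k => by
    rw [← abs_of_pos hn', ← abs_mul, abs_of_pos hn']
    congr 1
    field_simp
  have hmass : 1 - ∑ k ∈ Icc ((n : ℤ) * a) (n * b), phiFn σ (n * x - k) ≤ sigmoidTail σ (n * δ) :=
    one_sub_sum_phiFn_Icc_le hmono hnab (by push_cast; nlinarith [hx.1])
      (by push_cast; nlinarith [hx.2])
  calc |Ftil σ f a b n x - f x|
      ≤ ε + 2 * M * ∑ k ∈ (Icc ((n : ℤ) * a) (n * b)).filter (fun k : ℤ => n * η ≤ |n * x - k|),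
          phiFn σ (n * x - k) + M * (1 - ∑ k ∈ Icc ((n : ℤ) * a) (n * b), phiFn σ (n * x - k)) := by
        refine abs_sum_mul_sub_le _ _ (fun k _ => phiFn_nonneg hmono _)
          (sum_phiFn_Icc_le_one hmono h0 h1 _ _ _) hε (hM x hxab)
          (fun k hk hnear => hfη _ (div_natCast_mem_Icc hn hk) ?_) (fun k hk _ => ?_)
        · rw [Real.dist_eq, abs_sub_comm]
          exact lt_of_mul_lt_mul_left (by rw [← hscale]; exact not_le.1 hnear) hn'.le
        · linarith [abs_sub (f (k / n)) (f x), hM _ (div_natCast_mem_Icc hn hk), hM x hxab]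
    _ ≤ ε + 2 * M * sigmoidTail σ (n * η - 1) + M * sigmoidTail σ (n * δ) := by
        gcongr
        exact sum_phiFn_far_le hmono h0 h1 _ _ _ _

theorem modified_NN_uniform_convergence_general (σ : ℝ → ℝ)
    (hσ : Sigmoidal σ) (hmono : Monotone σ) (a b : ℤ)
    (δ : ℝ) (hδ : 0 < δ)
    (f : ℝ → ℝ) (hf : ContinuousOn f (Set.Icc (a : ℝ) (b : ℝ))) :
    TendstoUniformlyOn (fun (n : ℕ) (x : ℝ) => Ftil σ f a b n x) f atTop
      (Set.Icc ((a : ℝ) + δ) ((b : ℝ) - δ)) := by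
  obtain ⟨-, h0, h1⟩ := hσ
  obtain ⟨M, hM⟩ := isCompact_Icc.exists_bound_of_continuousOn hf
  rw [Metric.tendstoUniformlyOn_iff]
  intro ε hε
  obtain ⟨η, hη, hfη⟩ := Metric.uniformContinuousOn_iff.1
    (isCompact_Icc.uniformContinuousOn_of_continuous hf) (ε / 2) (half_pos hε)
  have htail : Tendsto (fun n : ℕ => 2 * M * sigmoidTail σ (n * η - 1) + M * sigmoidTail σ (n * δ))
      atTop (𝓝 0) := by
    have hnη : Tendsto (fun n : ℕ => (n : ℝ) * η - 1) atTop atTop :=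
      tendsto_atTop_add_const_right _ (-1) (tendsto_natCast_atTop_atTop.atTop_mul_const hη)
    have hnδ : Tendsto (fun n : ℕ => (n : ℝ) * δ) atTop atTop :=
      tendsto_natCast_atTop_atTop.atTop_mul_const hδ
    simpa using (((tendsto_sigmoidTail h0 h1).comp hnη).const_mul (2 * M)).add
      (((tendsto_sigmoidTail h0 h1).comp hnδ).const_mul M)
  filter_upwards [htail.eventually (gt_mem_nhds (half_pos hε)), eventually_gt_atTop 0]
    with n hn hn0 x hx
  rw [dist_comm, Real.dist_eq]
  have hfη' : ∀ y ∈ Set.Icc (a : ℝ) b, dist y x < η → |f y - f x| ≤ ε / 2 := fun y hy hyx =>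
    (hfη y hy x ⟨by linarith [hx.1], by linarith [hx.2]⟩ hyx).le
  have := abs_Ftil_sub_le hmono h0 h1 (by simpa using hM) (half_pos hε).le hfη' hn0 hδ.le hx
  linarith

theorem modified_NN_uniform_convergence (σ : ℝ → ℝ) (α β : ℝ) (m : ℕ) (K C : ℕ → ℝ)
    (hσ : Sigmoidal σ) (hmono : Monotone σ) (h1 : Sigma1 σ) (h2 : Sigma2 σ) (h3 : Sigma3 σ α)
    (h4 : Sigma4 σ m β K C) (a b : ℤ) (hab : a < b)
    (δ : ℝ) (hδ : 0 < δ) (hδ2 : (a : ℝ) + δ < (b : ℝ) - δ)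
    (f : ℝ → ℝ) (hf : ContinuousOn f (Set.Icc (a : ℝ) (b : ℝ))) :
    TendstoUniformlyOn (fun (n : ℕ) (x : ℝ) => Ftil σ f a b n x) f atTop
      (Set.Icc ((a : ℝ) + δ) ((b : ℝ) - δ)) :=
  modified_NN_uniform_convergence_general σ hσ hmono a b δ hδ f hf
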